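/- For every bounded measurable function f on [0,∞), M̄₁(f) ≤ R̄(f), where M̄₁(f) = lim_{θ→∞} limsup_{x→∞} (1/θ) ∫ₓ^{x+θ} f(t) dt and R̄(f) = limsup_{x→∞} e^{-x} ∫₀ˣ f(t)eᵗ dt. -/

import Mathlib

/-!
Write `S = Sop f`. Swapping the order of integration in `∫ S` gives the integrated form of
`S' = f - S`, namely `∫ f = ∫ S + S (x + θ) - S x` over `[x, x + θ]`, and `|S| ≤ C` on `[0, ∞)`;
so the `θ`-averages of `f` exceed those of `S` by at most `2C/θ`. For `c > limsup S` the
averages of `S` are eventually `≤ c`, hence the inner limsup in `M1 f` is at most `c + 2C/θ`,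
which tends to `c` as `θ → ∞`.
-/

open Filter MeasureTheory Set

noncomputable def Sop (f : ℝ → ℝ) (x : ℝ) : ℝ :=
  Real.exp (-x) * ∫ t in (0:ℝ)..x, f t * Real.exp t

noncomputable def M1 (f : ℝ → ℝ) : ℝ :=
  limsup (fun θ : ℝ =>
    limsup (fun x : ℝ => (1/θ) * ∫ t in x..(x+θ), f t) atTop) atTop

open Topology

theorem intervalIntegral.integral_mul_integral_swap {k g : ℝ → ℝ} {a b : ℝ} (hab : a ≤ b)
    (hk : IntervalIntegrable k volume a b) (hg : IntervalIntegrable g volume a b) :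
    ∫ t in a..b, k t * ∫ s in a..t, g s = ∫ s in a..b, g s * ∫ t in s..b, k t := by
  set μ := volume.restrict (Ioc a b)
  set H : ℝ × ℝ → ℝ := {p | p.2 ≤ p.1}.indicator fun p => k p.1 * g p.2
  have hH : Integrable H (μ.prod μ) :=
    (hk.1.mul_prod hg.1).indicator (measurableSet_le measurable_snd measurable_fst)
  have slice_fst : ∀ t ∈ Ioc a b, ∫ s, H (t, s) ∂μ = k t * ∫ s in a..t, g s := by
    intro t ht
    have : (fun s => H (t, s)) = (Iic t).indicator fun s => k t * g s := by
      ext s; simp [H, indicator_apply]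
    rw [this, setIntegral_indicator measurableSet_Iic, Ioc_inter_Iic, min_eq_right ht.2,
      MeasureTheory.integral_const_mul, intervalIntegral.integral_of_le ht.1.le]
  have slice_snd : ∀ s ∈ Ioc a b, ∫ t, H (t, s) ∂μ = g s * ∫ t in s..b, k t := by
    intro s hs
    have : (fun t => H (t, s)) = (Ici s).indicator fun t => g s * k t := by
      ext t; simp [H, indicator_apply, mul_comm]
    have hslice : Ioc a b ∩ Ici s = Icc s b := by
      ext t; simp only [mem_inter_iff, mem_Ioc, mem_Ici, mem_Icc]
      constructor <;> rintro ⟨h₁, h₂⟩ <;> grind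
    rw [this, setIntegral_indicator measurableSet_Ici, hslice, integral_Icc_eq_integral_Ioc,
      MeasureTheory.integral_const_mul, intervalIntegral.integral_of_le hs.2]
  calc ∫ t in a..b, k t * ∫ s in a..t, g s
      = ∫ t, ∫ s, H (t, s) ∂μ ∂μ := by
        rw [intervalIntegral.integral_of_le hab]
        exact (setIntegral_congr_fun measurableSet_Ioc slice_fst).symm
    _ = ∫ s, ∫ t, H (t, s) ∂μ ∂μ := integral_integral_swap hH
    _ = ∫ s in a..b, g s * ∫ t in s..b, k t := by
        rw [intervalIntegral.integral_of_le hab]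
        exact setIntegral_congr_fun measurableSet_Ioc slice_snd

theorem integral_exp_neg (a b : ℝ) :
    ∫ t in a..b, Real.exp (-t) = Real.exp (-a) - Real.exp (-b) := by
  rw [intervalIntegral.integral_comp_neg Real.exp, integral_exp]

theorem MeasureTheory.LocallyIntegrable.intervalIntegrable {E : Type*} [NormedAddCommGroup E]
    {f : ℝ → E} {μ : Measure ℝ} (hf : LocallyIntegrable f μ) (a b : ℝ) :
    IntervalIntegrable f μ a b :=
  (hf.integrableOn_isCompact isCompact_uIcc).intervalIntegrable

section Sop

variable {f : ℝ → ℝ}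

theorem intervalIntegrable_mul_exp (hf : LocallyIntegrable f) (a b : ℝ) :
    IntervalIntegrable (fun t => f t * Real.exp t) volume a b :=
  (hf.intervalIntegrable a b).mul_continuousOn Real.continuous_exp.continuousOn

theorem continuous_Sop (hf : LocallyIntegrable f) : Continuous (Sop f) :=
  (Real.continuous_exp.comp continuous_neg).mul
    (intervalIntegral.continuous_primitive (intervalIntegrable_mul_exp hf) 0)

theorem integral_Sop (hf : LocallyIntegrable f) {b : ℝ} (hb : 0 ≤ b) :
    ∫ t in 0..b, Sop f t = (∫ t in 0..b, f t) - Sop f b := by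
  calc ∫ t in 0..b, Sop f t
      = ∫ s in 0..b, (f s * Real.exp s) * (Real.exp (-s) - Real.exp (-b)) := by
        simp only [Sop]
        rw [intervalIntegral.integral_mul_integral_swap hb
          ((by fun_prop : Continuous fun t => Real.exp (-t)).intervalIntegrable _ _)
          (intervalIntegrable_mul_exp hf 0 b)]
        simp only [integral_exp_neg]
    _ = ∫ s in 0..b, (f s - Real.exp (-b) * (f s * Real.exp s)) := by
        refine intervalIntegral.integral_congr fun s _ => ?_
        simp only [mul_sub, Real.exp_neg]
        field_simp
    _ = (∫ t in 0..b, f t) - Sop f b := by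
        rw [intervalIntegral.integral_sub (hf.intervalIntegrable 0 b)
          ((intervalIntegrable_mul_exp hf 0 b).const_mul _),
          intervalIntegral.integral_const_mul, Sop]

theorem integral_eq_integral_Sop_add (hf : LocallyIntegrable f) {x b : ℝ} (hx : 0 ≤ x)
    (hb : 0 ≤ b) : ∫ t in x..b, f t = (∫ t in x..b, Sop f t) + Sop f b - Sop f x := by
  have hSi : ∀ a, IntervalIntegrable (Sop f) volume 0 a := fun a =>
    (continuous_Sop hf).intervalIntegrable _ _
  rw [← intervalIntegral.integral_interval_sub_left (hf.intervalIntegrable 0 b)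
      (hf.intervalIntegrable 0 x), ← intervalIntegral.integral_interval_sub_left (hSi b) (hSi x),
    integral_Sop hf hb, integral_Sop hf hx]
  ring

theorem abs_Sop_le {C : ℝ} (hbd : ∀ t, |f t| ≤ C) {x : ℝ} (hx : 0 ≤ x) : |Sop f x| ≤ C := by
  have hC : 0 ≤ C := (abs_nonneg _).trans (hbd 0)
  have hint : |∫ t in 0..x, f t * Real.exp t| ≤ ∫ t in 0..x, C * Real.exp t :=
    intervalIntegral.norm_integral_le_of_norm_le (f := fun t => f t * Real.exp t)
      (g := fun t => C * Real.exp t) hx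
      (ae_of_all _ fun t _ => by
        rw [Real.norm_eq_abs, abs_mul, Real.abs_exp]
        exact mul_le_mul_of_nonneg_right (hbd t) (Real.exp_pos t).le)
      ((continuous_const.mul Real.continuous_exp).intervalIntegrable _ _)
  rw [intervalIntegral.integral_const_mul, integral_exp, Real.exp_zero] at hint
  calc |Sop f x| = Real.exp (-x) * |∫ t in 0..x, f t * Real.exp t| := by
        rw [Sop, abs_mul, abs_of_pos (Real.exp_pos _)]
    _ ≤ Real.exp (-x) * (C * (Real.exp x - 1)) := by gcongr
    _ ≤ C := by
        rw [Real.exp_neg]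
        field_simp
        nlinarith [Real.exp_pos x]

theorem abs_average_le {C : ℝ} (hbd : ∀ t, |f t| ≤ C) (θ x : ℝ) :
    |(1/θ) * ∫ t in x..(x+θ), f t| ≤ C := by
  have hC : 0 ≤ C := (abs_nonneg _).trans (hbd 0)
  have hint : |∫ t in x..(x+θ), f t| ≤ C * |θ| := by
    simpa using intervalIntegral.norm_integral_le_of_norm_le_const (a := x) (b := x + θ)
      fun t _ => (Real.norm_eq_abs _).trans_le (hbd t)
  rcases eq_or_ne θ 0 with rfl | hθ
  · simpa using hC
  · rw [abs_mul, one_div, abs_inv, inv_mul_le_iff₀ (abs_pos.2 hθ)]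
    linarith

theorem eventually_average_le {C c θ : ℝ} (hf : LocallyIntegrable f) (hbd : ∀ t, |f t| ≤ C)
    (hθ : 0 < θ) (hc : ∀ᶠ x in atTop, Sop f x ≤ c) :
    ∀ᶠ x in atTop, (1/θ) * ∫ t in x..(x+θ), f t ≤ c + 2 * C / θ := by
  obtain ⟨x₀, hx₀⟩ := eventually_atTop.1 hc
  filter_upwards [eventually_ge_atTop (max x₀ 0)] with x hx
  have hx₀x : x₀ ≤ x := (le_max_left _ _).trans hx
  have hx0 : 0 ≤ x := (le_max_right _ _).trans hx
  have hS : ∫ t in x..(x+θ), Sop f t ≤ c * θ := by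
    calc ∫ t in x..(x+θ), Sop f t ≤ ∫ _ in x..(x+θ), c :=
          intervalIntegral.integral_mono_on (by linarith)
            ((continuous_Sop hf).intervalIntegrable _ _) intervalIntegrable_const
            fun t ht => hx₀ t (hx₀x.trans ht.1)
      _ = c * θ := by simp [mul_comm]
  have hI : ∫ t in x..(x+θ), f t ≤ c * θ + 2 * C := by
    rw [integral_eq_integral_Sop_add hf hx0 (by linarith)]
    linarith [abs_le.1 (abs_Sop_le hbd hx0),
      abs_le.1 (abs_Sop_le hbd (x := x + θ) (by linarith))]
  calc (1/θ) * ∫ t in x..(x+θ), f t ≤ (1/θ) * (c * θ + 2 * C) := by gcongr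
    _ = c + 2 * C / θ := by field_simp

end Sop

/-- `M̄₁(f) ≤ R̄(f)` for every bounded measurable `f` on `[0,∞)`. -/
theorem stmt8 (f : ℝ → ℝ) (C : ℝ) (hf : Measurable f) (hbd : ∀ x, |f x| ≤ C) :
    M1 f ≤ limsup (Sop f) atTop := by
  have hloc : LocallyIntegrable f := (locallyIntegrable_const C).mono hf.aestronglyMeasurable
    (ae_of_all _ fun x => (hbd x).trans (le_abs_self C))
  have hS : IsBoundedUnder (· ≤ ·) atTop (Sop f) := isBoundedUnder_of_eventually_le <|
    (eventually_ge_atTop 0).mono fun x hx => (abs_le.1 (abs_Sop_le hbd hx)).2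
  have hinner_ge : ∀ θ, -C ≤ limsup (fun x => (1/θ) * ∫ t in x..(x+θ), f t) atTop := fun θ =>
    le_limsup_of_frequently_le
      (Frequently.of_forall fun x => (abs_le.1 (abs_average_le hbd θ x)).1)
      (isBoundedUnder_of_eventually_le
        (Eventually.of_forall fun x => (abs_le.1 (abs_average_le hbd θ x)).2))
  refine le_of_forall_gt_imp_ge_of_dense fun c hc => ?_
  have hSc : ∀ᶠ x in atTop, Sop f x ≤ c :=
    (eventually_lt_of_limsup_lt hc hS).mono fun _ => le_of_lt
  have hinner : ∀ θ > 0, limsup (fun x => (1/θ) * ∫ t in x..(x+θ), f t) atTop ≤ c + 2 * C / θ :=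
    fun θ hθ => limsup_le_of_le
      (isCoboundedUnder_le_of_le atTop fun x => (abs_le.1 (abs_average_le hbd θ x)).1)
      (eventually_average_le hloc hbd hθ hSc)
  have hlim : Tendsto (fun θ : ℝ => c + 2 * C / θ) atTop (𝓝 c) := by
    simpa using tendsto_const_nhds.add ((tendsto_const_nhds (x := 2 * C)).div_atTop tendsto_id)
  calc M1 f ≤ limsup (fun θ : ℝ => c + 2 * C / θ) atTop :=
        limsup_le_limsup ((eventually_gt_atTop 0).mono hinner)
          (isCoboundedUnder_le_of_le atTop hinner_ge) hlim.isBoundedUnder_le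
    _ = c := hlim.limsup_eq
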